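/- In the maximin construction (W-votes of total weight 2K, each originally p ≻ a ≻ b ≻ c, plus votes c ≻ a ≻ b ≻ p, b ≻ c ≻ a ≻ p, a ≻ c ≻ b ≻ p each of weight K), suppose all W-votes are replaced by arbitrary linear orders that rank p first. If p wins under maximin with tie-breaking p ≻ a ≻ b ≻ c, then the candidates a, b, c must form a cycle in the weighted majority graph (i.e., the pairwise comparisons among a, b, c are cyclic, each strict). -/

import Mathlib

/-- The four candidates. -/
inductive Cand : Type
  | p | a | b | c
deriving DecidableEq

open Cand

/-- Weighted pairwise margin `D(x,y)`: total weight preferring `x` to `y` minus total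
weight preferring `y` to `x` (each vote is a pair (weight, full ranking list)). -/
def marg (E : Multiset (ℕ × List Cand)) (x y : Cand) : ℤ :=
  (E.map fun v => if v.2.idxOf x < v.2.idxOf y then (v.1 : ℤ) else -(v.1 : ℤ)).sum

/-- Maximin score: minimum pairwise margin against the other candidates. -/
def maximinScore (E : Multiset (ℕ × List Cand)) : Cand → ℤ
  | Cand.p => min (marg E Cand.p Cand.a) (min (marg E Cand.p Cand.b) (marg E Cand.p Cand.c))
  | Cand.a => min (marg E Cand.a Cand.p) (min (marg E Cand.a Cand.b) (marg E Cand.a Cand.c))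
  | Cand.b => min (marg E Cand.b Cand.p) (min (marg E Cand.b Cand.a) (marg E Cand.b Cand.c))
  | Cand.c => min (marg E Cand.c Cand.p) (min (marg E Cand.c Cand.a) (marg E Cand.c Cand.b))

/-- `x` wins w.r.t. a score function and a tie-breaking priority order
(lower priority value = preferred by the tie-breaking order). -/
def Wins {S : Type} [LinearOrder S] (score : Cand → S) (prio : Cand → ℕ) (x : Cand) : Prop :=
  ∀ y, y ≠ x → score y < score x ∨ (score y = score x ∧ prio x < prio y)

/-- Tie-breaking order `p ≻ a ≻ b ≻ c`. -/
def prioPABC : Cand → ℕ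
  | Cand.p => 0
  | Cand.a => 1
  | Cand.b => 2
  | Cand.c => 3

lemma cand_beq (x y : Cand) : (x == y) = decide (x = y) := rfl

lemma marg_add (V F : Multiset (ℕ × List Cand)) (x y : Cand) :
    marg (V + F) x y = marg V x y + marg F x y := by simp [marg]

lemma marg_p_first (V : Multiset (ℕ × List Cand)) (x : Cand) (hx : x ≠ p)
    (hrank : ∀ v ∈ V, v.2.head? = some p) :
    marg V p x = ((V.map Prod.fst).sum : ℕ) := by
  rw [marg, Multiset.map_congr rfl (fun v hv => ?_)]
  · rw [← Multiset.map_map]; exact (Nat.cast_multiset_sum _).symm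
  · have hhead := hrank v hv
    obtain ⟨l, hl⟩ : ∃ l, v.2 = p :: l := by
      cases h : v.2 with
      | nil => rw [h] at hhead; simp at hhead
      | cons hd t => rw [h] at hhead; simp at hhead; exact ⟨t, by rw [hhead]⟩
    rw [hl]; simp [List.idxOf_cons, cand_beq, Ne.symm hx]

lemma marg_first_p (V : Multiset (ℕ × List Cand)) (x : Cand)
    (hrank : ∀ v ∈ V, v.2.head? = some p) :
    marg V x p = -((V.map Prod.fst).sum : ℕ) := by
  rw [marg, Multiset.map_congr rfl (fun v hv => ?_)]
  · rw [← Multiset.map_map, Multiset.sum_map_neg', Nat.cast_multiset_sum, Multiset.map_map]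
  · have hhead := hrank v hv
    obtain ⟨l, hl⟩ : ∃ l, v.2 = p :: l := by
      cases h : v.2 with
      | nil => rw [h] at hhead; simp at hhead
      | cons hd t => rw [h] at hhead; simp at hhead; exact ⟨t, by rw [hhead]⟩
    rw [hl]; simp [List.idxOf_cons, cand_beq]

lemma marg_antisym (E : Multiset (ℕ × List Cand)) (x y : Cand) (hxy : x ≠ y)
    (h : ∀ v ∈ E, x ∈ v.2 ∧ y ∈ v.2) :
    marg E x y + marg E y x = 0 := by
  rw [marg, marg, ← Multiset.sum_map_add]
  apply Multiset.sum_eq_zero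
  intro z hz
  rw [Multiset.mem_map] at hz
  obtain ⟨v, hv, rfl⟩ := hz
  obtain ⟨hx, hy⟩ := h v hv
  have hne : v.2.idxOf x ≠ v.2.idxOf y := fun he => hxy ((List.idxOf_inj hx).1 he)
  rcases lt_or_gt_of_ne hne with h1 | h1
  · rw [if_pos h1, if_neg (by omega)]; ring
  · rw [if_neg (by omega), if_pos h1]; ring

/-- In the maximin construction, if all `W`-votes are replaced by arbitrary linear orders
ranking `p` first and `p` wins under maximin with tie-breaking `p ≻ a ≻ b ≻ c`, then the
candidates `a`, `b`, `c` form a strict cycle in the weighted majority graph. -/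
theorem stmt_5 (K : ℕ) (hK : 0 < K) (W : Multiset ℕ)
    (hpos : ∀ w ∈ W, 0 < w) (hsum : W.sum = 2 * K)
    (V : Multiset (ℕ × List Cand)) (hV : V.map Prod.fst = W)
    (hrank : ∀ v ∈ V, v.2.Perm [p, a, b, c] ∧ v.2.head? = some p) :
    let E : Multiset (ℕ × List Cand) :=
      V + {(K, [c, a, b, p]), (K, [b, c, a, p]), (K, [a, c, b, p])}
    Wins (maximinScore E) prioPABC p →
      ((0 < marg E a b ∧ 0 < marg E b c ∧ 0 < marg E c a) ∨
       (0 < marg E b a ∧ 0 < marg E c b ∧ 0 < marg E a c)) := by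
  intro E hwin
  have hrank' : ∀ v ∈ V, v.2.head? = some p := fun v hv => (hrank v hv).2
  set F : Multiset (ℕ × List Cand) :=
    {(K, [c, a, b, p]), (K, [b, c, a, p]), (K, [a, c, b, p])} with hF
  have hEdef : E = V + F := rfl
  have hWsum : ((V.map Prod.fst).sum : ℤ) = 2 * K := by rw [hV, hsum]; push_cast; ring
  -- margins vs p
  have hFp : ∀ x : Cand, x ≠ p → marg F p x = -(3 * K) ∧ marg F x p = 3 * K := by
    intro x hx
    cases x <;> first | (exact absurd rfl hx) |
      (constructor <;> (simp [hF, marg, List.idxOf, List.findIdx, List.findIdx.go, cand_beq]) <;> ring)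
  have hEp : ∀ x : Cand, x ≠ p → marg E p x = -K ∧ marg E x p = K := by
    intro x hx
    obtain ⟨h1, h2⟩ := hFp x hx
    constructor
    · rw [hEdef, marg_add, marg_p_first V x hx hrank', h1, hWsum]; ring
    · rw [hEdef, marg_add, marg_first_p V x hrank', h2, hWsum]; ring
  -- all candidates appear in every ballot
  have hmem : ∀ v ∈ E, ∀ x : Cand, x ∈ v.2 := by
    intro v hv x
    rcases Multiset.mem_add.1 hv with h | h
    · exact ((hrank v h).1.mem_iff).2 (by cases x <;> simp)
    · simp only [hF, Multiset.insert_eq_cons, Multiset.mem_cons, Multiset.mem_singleton] at h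
      rcases h with rfl | rfl | rfl <;> cases x <;> simp
  have hab := marg_antisym E a b (by simp) (fun v hv => ⟨hmem v hv a, hmem v hv b⟩)
  have hbc := marg_antisym E b c (by simp) (fun v hv => ⟨hmem v hv b, hmem v hv c⟩)
  have hca := marg_antisym E c a (by simp) (fun v hv => ⟨hmem v hv c, hmem v hv a⟩)
  have hK' : (0 : ℤ) < K := by exact_mod_cast hK
  -- score of p is -K
  have hscorep : maximinScore E p = -K := by
    simp only [maximinScore, (hEp a (by simp)).1, (hEp b (by simp)).1, (hEp c (by simp)).1,
      min_self]
  have hle : ∀ y : Cand, y ≠ p → maximinScore E y ≤ -K := by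
    intro y hy
    rcases hwin y hy with h | h
    · rw [hscorep] at h; exact le_of_lt h
    · rw [hscorep] at h; exact le_of_eq h.1
  have ha := hle a (by simp)
  have hb := hle b (by simp)
  have hc := hle c (by simp)
  simp only [maximinScore, (hEp a (by simp)).2, (hEp b (by simp)).2, (hEp c (by simp)).2] at ha hb hc
  have ha' : marg E a b ≤ -K ∨ marg E a c ≤ -K := by
    rcases min_le_iff.1 ha with h | h
    · exact absurd h (by omega)
    · exact min_le_iff.1 h
  have hb' : marg E b a ≤ -K ∨ marg E b c ≤ -K := by
    rcases min_le_iff.1 hb with h | h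
    · exact absurd h (by omega)
    · exact min_le_iff.1 h
  have hc' : marg E c a ≤ -K ∨ marg E c b ≤ -K := by
    rcases min_le_iff.1 hc with h | h
    · exact absurd h (by omega)
    · exact min_le_iff.1 h
  rcases ha' with h1 | h1 <;> rcases hb' with h2 | h2 <;> rcases hc' with h3 | h3 <;>
    first
      | (exfalso; linarith)
      | (left; exact ⟨by linarith, by linarith, by linarith⟩)
      | (right; exact ⟨by linarith, by linarith, by linarith⟩)
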